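/- arXiv:1610.04395 — 3 statements merged into one kernel-verified Lean document; each statement's English description precedes it below -/
import Mathlib

section
/- Let n ≥ 1, let M be a symmetric positive definite real n×n matrix, and let Δ_d ∈ ℝⁿ be a constant vector. Let k_p, k_d, k_I > 0 be gains and let κ ∈ (0,2), δ := |κ − 1|, and suppose 0 < k_I < k_d³(1 − δ²) and k_p > max{k₁, k₂, 2κ k_d²}, where k₁ := (k_I/(2k_d))(√(1 + 16κ²k_d²/k_I) − 1) and k₂ := (k_I²/(2k_d⁴))(1 + √(1 + 4k_d³(k_I² + 4κk_d³(1 + κk_d³))/k_I³)). Then every twice continuously differentiable solution (E, E_I) : [0,∞) → ℝⁿ × ℝⁿ of the closed-loop PID error dynamics Ė_I(t) = E(t), M Ë(t) = −M(k_p E(t) + k_d Ė(t) + k_I E_I(t)) + Δ_d converges exponentially to the equilibrium (E, Ė, E_I) = (0, 0, M⁻¹Δ_d/k_I): there exist constants C > 0 and a > 0 (depending on the initial condition) such that ‖E(t)‖ + ‖Ė(t)‖ + ‖E_I(t) − M⁻¹Δ_d/k_I‖ ≤ C e^{−a t} for all t ≥ 0. -/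
/-!
Shift the integral state to the equilibrium, `z = E_I - M⁻¹Δd / k_I`, and set `w = Ė + k_d E`.
After cancelling `M`, the closed loop is the linear system `ż = E`, `Ė = w - k_d E`,
`ẇ = -k_p E - k_I z`, whose characteristic polynomial `s³ + k_d s² + k_p s + k_I` is Hurwitz
exactly when `k_I < k_d k_p`. The energy `k_d k_I/2 ‖z‖² + k_I ⟪z, E⟫ + k_p/2 ‖E‖² + ‖w‖²/2`
is then positive definite and decreases at rate `(k_d k_p - k_I) ‖E‖²`; adding a small multiple of
a cross term makes the decrease strict in all three variables, and Grönwall's inequality turns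
this into exponential decay of the Lyapunov function, hence of the state.
-/

open Real
open scoped RealInnerProductSpace

theorem le_mul_exp_of_hasDerivAt_le_mul {f f' : ℝ → ℝ} {K : ℝ}
    (hf : ∀ t ≥ 0, HasDerivAt f (f' t) t) (hbound : ∀ t ≥ 0, f' t ≤ K * f t)
    {t : ℝ} (ht : 0 ≤ t) : f t ≤ f 0 * exp (K * t) := by
  have h := le_gronwallBound_of_liminf_deriv_right_le (f := f) (f' := f') (ε := 0)
    (fun x hx ↦ (hf x hx.1).continuousAt.continuousWithinAt)
    (fun x hx _ hr ↦ (hf x hx.1).hasDerivWithinAt.liminf_right_slope_le hr) le_rfl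
    (fun x hx ↦ by simpa using hbound x hx.1) t ⟨ht, le_rfl⟩
  simpa [gronwallBound_ε0] using h

theorem div_mul_sq_add_sq_le_quadratic {p q r : ℝ} (hpr : 0 < p + r) (a b : ℝ) :
    (p * r - q ^ 2) / (p + r) * (a ^ 2 + b ^ 2) ≤ p * a ^ 2 - 2 * q * a * b + r * b ^ 2 := by
  rw [div_mul_eq_mul_div, div_le_iff₀ hpr]
  nlinarith [sq_nonneg (p * a - q * b), sq_nonneg (q * a - r * b)]

theorem le_div_mul_exp_of_lyapunov {V V' N : ℝ → ℝ} {m K c : ℝ}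
    (hm : 0 < m) (hK : 0 < K) (hc : 0 ≤ c)
    (hV : ∀ t ≥ 0, HasDerivAt V (V' t) t) (hV' : ∀ t ≥ 0, V' t ≤ -c * N t)
    (hlow : ∀ t ≥ 0, m * N t ≤ V t) (hup : ∀ t ≥ 0, V t ≤ K * N t) :
    ∀ t ≥ 0, N t ≤ V 0 / m * exp (-(c / K) * t) := by
  intro t ht
  have hdecay := le_mul_exp_of_hasDerivAt_le_mul (K := -(c / K)) hV (fun s hs ↦ ?_) ht
  · rw [div_mul_eq_mul_div, le_div_iff₀ hm]
    linarith [hlow t ht]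
  · calc V' s ≤ -c * N s := hV' s hs
      _ = -(c / K) * (K * N s) := by field_simp
      _ ≤ -(c / K) * V s :=
        mul_le_mul_of_nonpos_left (hup s hs) (neg_nonpos.mpr (div_nonneg hc hK.le))

section
variable {F : Type*} [NormedAddCommGroup F] [InnerProductSpace ℝ F]

theorem abs_real_inner_le_half_add_sq (x y : F) :
    |⟪x, y⟫| ≤ (‖x‖ ^ 2 + ‖y‖ ^ 2) / 2 :=
  (abs_real_inner_le_norm x y).trans (by nlinarith [sq_nonneg (‖x‖ - ‖y‖)])

variable (kp kd kI : ℝ)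

noncomputable def pidEnergy (z e w : F) : ℝ :=
  kd * kI / 2 * ‖z‖ ^ 2 + kI * ⟪z, e⟫ + kp / 2 * ‖e‖ ^ 2 + ‖w‖ ^ 2 / 2

noncomputable def pidCrossTerm (z e w : F) : ℝ :=
  (kp - kI) / 2 * ‖z‖ ^ 2 - (kd + 1) / 2 * ‖e‖ ^ 2 + ⟪z, w⟫ - ⟪e, w⟫

noncomputable def pidLyapunov (ε : ℝ) (z e w : F) : ℝ :=
  pidEnergy kp kd kI z e w + ε * pidCrossTerm kp kd kI z e w

variable {kp kd kI}

section Trajectory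
variable {z e w : ℝ → F} {t : ℝ}

theorem hasDerivAt_pidEnergy (hz : HasDerivAt z (e t) t)
    (he : HasDerivAt e (w t - kd • e t) t) (hw : HasDerivAt w (-(kp • e t) - kI • z t) t) :
    HasDerivAt (fun s ↦ pidEnergy kp kd kI (z s) (e s) (w s))
      (-(kd * kp - kI) * ‖e t‖ ^ 2) t := by
  refine ((((hz.norm_sq.const_mul (kd * kI / 2)).add ((hz.inner ℝ he).const_mul kI)).add
    (he.norm_sq.const_mul (kp / 2))).add (hw.norm_sq.div_const 2)).congr_deriv ?_
  simp only [inner_sub_right, inner_neg_right, real_inner_smul_right,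
    real_inner_self_eq_norm_sq, real_inner_comm (e t) (w t), real_inner_comm (z t) (w t)]
  ring

theorem hasDerivAt_pidCrossTerm (hz : HasDerivAt z (e t) t)
    (he : HasDerivAt e (w t - kd • e t) t) (hw : HasDerivAt w (-(kp • e t) - kI • z t) t) :
    HasDerivAt (fun s ↦ pidCrossTerm kp kd kI (z s) (e s) (w s))
      (-kI * ‖z t‖ ^ 2 + (kp + kd ^ 2 + kd) * ‖e t‖ ^ 2 - ‖w t‖ ^ 2) t := by
  refine ((((hz.norm_sq.const_mul ((kp - kI) / 2)).sub
    (he.norm_sq.const_mul ((kd + 1) / 2))).add (hz.inner ℝ hw)).sub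
    (he.inner ℝ hw)).congr_deriv ?_
  simp only [inner_sub_left, inner_sub_right, inner_neg_right, real_inner_smul_left,
    real_inner_smul_right, real_inner_self_eq_norm_sq, real_inner_comm (z t) (e t)]
  ring

theorem hasDerivAt_pidLyapunov (ε : ℝ) (hz : HasDerivAt z (e t) t)
    (he : HasDerivAt e (w t - kd • e t) t) (hw : HasDerivAt w (-(kp • e t) - kI • z t) t) :
    HasDerivAt (fun s ↦ pidLyapunov kp kd kI ε (z s) (e s) (w s))
      (-(kd * kp - kI) * ‖e t‖ ^ 2 +
        ε * (-kI * ‖z t‖ ^ 2 + (kp + kd ^ 2 + kd) * ‖e t‖ ^ 2 - ‖w t‖ ^ 2)) t :=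
  (hasDerivAt_pidEnergy hz he hw).add ((hasDerivAt_pidCrossTerm hz he hw).const_mul ε)

end Trajectory

theorem exists_pos_mul_le_pidEnergy (hkp : 0 < kp) (hkd : 0 < kd) (hkI : 0 < kI)
    (hD : kI < kd * kp) :
    ∃ m > 0, ∀ z e w : F,
      m * (‖z‖ ^ 2 + ‖e‖ ^ 2 + ‖w‖ ^ 2) ≤ pidEnergy kp kd kI z e w := by
  set m₀ := (kd * kI / 2 * (kp / 2) - (kI / 2) ^ 2) / (kd * kI / 2 + kp / 2)
  have hm₀ : 0 < m₀ := by
    apply div_pos _ (by positivity)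
    nlinarith [mul_lt_mul_of_pos_left hD hkI]
  refine ⟨min m₀ (1 / 2), lt_min hm₀ one_half_pos, fun z e w ↦ ?_⟩
  have hquad := div_mul_sq_add_sq_le_quadratic (p := kd * kI / 2) (q := kI / 2) (r := kp / 2)
    (by positivity) ‖z‖ ‖e‖
  have hinner : -(‖z‖ * ‖e‖) ≤ ⟪z, e⟫ := neg_le_of_abs_le (abs_real_inner_le_norm z e)
  have h₁ := mul_le_mul_of_nonneg_right (min_le_left m₀ (1 / 2))
    (add_nonneg (sq_nonneg ‖z‖) (sq_nonneg ‖e‖))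
  have h₂ := mul_le_mul_of_nonneg_right (min_le_right m₀ (1 / 2)) (sq_nonneg ‖w‖)
  unfold pidEnergy
  nlinarith

theorem exists_pidEnergy_le_mul :
    ∃ K > 0, ∀ z e w : F,
      pidEnergy kp kd kI z e w ≤ K * (‖z‖ ^ 2 + ‖e‖ ^ 2 + ‖w‖ ^ 2) := by
  refine ⟨|kd * kI| + |kI| + |kp| + 1, by positivity, fun z e w ↦ ?_⟩
  have hinner := abs_le.mp (abs_real_inner_le_half_add_sq z e)
  unfold pidEnergy
  nlinarith [le_abs_self (kd * kI), le_abs_self kI, le_abs_self kp, neg_abs_le kI,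
    abs_nonneg (kd * kI), abs_nonneg kI, abs_nonneg kp,
    sq_nonneg ‖z‖, sq_nonneg ‖e‖, sq_nonneg ‖w‖]

theorem exists_abs_pidCrossTerm_le_mul :
    ∃ L > 0, ∀ z e w : F,
      |pidCrossTerm kp kd kI z e w| ≤ L * (‖z‖ ^ 2 + ‖e‖ ^ 2 + ‖w‖ ^ 2) := by
  refine ⟨|kp - kI| + |kd + 1| + 2, by positivity, fun z e w ↦ ?_⟩
  have hzw := abs_le.mp (abs_real_inner_le_half_add_sq z w)
  have hew := abs_le.mp (abs_real_inner_le_half_add_sq e w)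
  unfold pidCrossTerm
  rw [abs_le]
  constructor <;>
    nlinarith [le_abs_self (kp - kI), neg_abs_le (kp - kI), le_abs_self (kd + 1),
      neg_abs_le (kd + 1), sq_nonneg ‖z‖, sq_nonneg ‖e‖, sq_nonneg ‖w‖]

theorem exists_pidLyapunov_bounds (hkp : 0 < kp) (hkd : 0 < kd) (hkI : 0 < kI)
    (hD : kI < kd * kp) :
    ∃ ε m K c : ℝ, 0 < m ∧ 0 < K ∧ 0 < c ∧ ∀ z e w : F,
      m * (‖z‖ ^ 2 + ‖e‖ ^ 2 + ‖w‖ ^ 2) ≤ pidLyapunov kp kd kI ε z e w ∧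
      pidLyapunov kp kd kI ε z e w ≤ K * (‖z‖ ^ 2 + ‖e‖ ^ 2 + ‖w‖ ^ 2) ∧
      -(kd * kp - kI) * ‖e‖ ^ 2 +
          ε * (-kI * ‖z‖ ^ 2 + (kp + kd ^ 2 + kd) * ‖e‖ ^ 2 - ‖w‖ ^ 2) ≤
        -c * (‖z‖ ^ 2 + ‖e‖ ^ 2 + ‖w‖ ^ 2) := by
  obtain ⟨m, hm, hlow⟩ := exists_pos_mul_le_pidEnergy (F := F) hkp hkd hkI hD
  obtain ⟨K, hK, hup⟩ := exists_pidEnergy_le_mul (F := F) (kp := kp) (kd := kd) (kI := kI)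
  obtain ⟨L, hL, hcross⟩ :=
    exists_abs_pidCrossTerm_le_mul (F := F) (kp := kp) (kd := kd) (kI := kI)
  set D := kd * kp - kI
  set P := kp + kd ^ 2 + kd
  have hD₀ : 0 < D := sub_pos.mpr hD
  -- `ε` small enough that the cross term costs at most half of the energy's coercivity
  -- constant and half of its dissipation in `e`.
  set ε := min (m / (2 * L)) (D / (2 * P))
  have hε : 0 < ε := lt_min (by positivity) (by positivity)
  have hεL : ε * L ≤ m / 2 := by
    have := min_le_left (m / (2 * L)) (D / (2 * P))
    rw [le_div_iff₀ (by positivity)] at this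
    linarith
  have hεP : ε * P ≤ D / 2 := by
    have := min_le_right (m / (2 * L)) (D / (2 * P))
    rw [le_div_iff₀ (by positivity)] at this
    linarith
  refine ⟨ε, m / 2, K + m / 2, min (D / 2) (ε * min kI 1), by positivity, by positivity,
    lt_min (by positivity) (by positivity), fun z e w ↦ ?_⟩
  have hN : 0 ≤ ‖z‖ ^ 2 + ‖e‖ ^ 2 + ‖w‖ ^ 2 := by positivity
  have hW := abs_le.mp (hcross z e w)
  refine ⟨?_, ?_, ?_⟩
  · unfold pidLyapunov
    nlinarith [hlow z e w, mul_le_mul_of_nonneg_left hW.1 hε.le,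
      mul_le_mul_of_nonneg_right hεL hN]
  · unfold pidLyapunov
    nlinarith [hup z e w, mul_le_mul_of_nonneg_left hW.2 hε.le,
      mul_le_mul_of_nonneg_right hεL hN]
  · have hc₁ := min_le_left (D / 2) (ε * min kI 1)
    have hc₂ := min_le_right (D / 2) (ε * min kI 1)
    have hkI₁ : ε * min kI 1 ≤ ε * kI := mul_le_mul_of_nonneg_left (min_le_left _ _) hε.le
    have h₁₁ : ε * min kI 1 ≤ ε := mul_le_of_le_one_right hε.le (min_le_right _ _)
    nlinarith [mul_le_mul_of_nonneg_right hεP (sq_nonneg ‖e‖),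
      mul_le_mul_of_nonneg_right hc₁ (sq_nonneg ‖e‖),
      mul_le_mul_of_nonneg_right (hc₂.trans hkI₁) (sq_nonneg ‖z‖),
      mul_le_mul_of_nonneg_right (hc₂.trans h₁₁) (sq_nonneg ‖w‖)]

theorem pid_state_exp_decay (hkp : 0 < kp) (hkd : 0 < kd) (hkI : 0 < kI) (hD : kI < kd * kp)
    {z e w : ℝ → F} (hz : ∀ t ≥ 0, HasDerivAt z (e t) t)
    (he : ∀ t ≥ 0, HasDerivAt e (w t - kd • e t) t)
    (hw : ∀ t ≥ 0, HasDerivAt w (-(kp • e t) - kI • z t) t) :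
    ∃ C > 0, ∃ a > 0, ∀ t ≥ 0, ‖z t‖ + ‖e t‖ + ‖w t‖ ≤ C * exp (-a * t) := by
  obtain ⟨ε, m, K, c, hm, hK, hc, hV⟩ := exists_pidLyapunov_bounds (F := F) hkp hkd hkI hD
  have hN := le_div_mul_exp_of_lyapunov (N := fun t ↦ ‖z t‖ ^ 2 + ‖e t‖ ^ 2 + ‖w t‖ ^ 2)
    hm hK hc.le
    (fun t ht ↦ hasDerivAt_pidLyapunov ε (hz t ht) (he t ht) (hw t ht))
    (fun t _ ↦ (hV _ _ _).2.2) (fun t _ ↦ (hV _ _ _).1) (fun t _ ↦ (hV _ _ _).2.1)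
  set B := pidLyapunov kp kd kI ε (z 0) (e 0) (w 0) / m
  have hB : 0 ≤ B := div_nonneg ((mul_nonneg hm.le (by positivity)).trans (hV _ _ _).1) hm.le
  refine ⟨√(3 * B) + 1, by positivity, c / (2 * K), by positivity, fun t ht ↦ ?_⟩
  have hsq : (‖z t‖ + ‖e t‖ + ‖w t‖) ^ 2 ≤ (√(3 * B) * exp (-(c / (2 * K)) * t)) ^ 2 :=
    calc (‖z t‖ + ‖e t‖ + ‖w t‖) ^ 2
        ≤ 3 * (‖z t‖ ^ 2 + ‖e t‖ ^ 2 + ‖w t‖ ^ 2) := by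
          nlinarith [sq_nonneg (‖z t‖ - ‖e t‖), sq_nonneg (‖z t‖ - ‖w t‖),
            sq_nonneg (‖e t‖ - ‖w t‖)]
      _ ≤ 3 * (B * exp (-(c / K) * t)) := by gcongr; exact hN t ht
      _ = (√(3 * B) * exp (-(c / (2 * K)) * t)) ^ 2 := by
          rw [mul_pow, sq_sqrt (by positivity), sq (exp _), ← exp_add]
          ring_nf
  have hle := (pow_le_pow_iff_left₀ (by positivity) (by positivity) two_ne_zero).mp hsq
  nlinarith [exp_pos (-(c / (2 * K)) * t)]

end

theorem toEuclideanLin_inv_apply_toEuclideanLin {𝕜 ι : Type*} [RCLike 𝕜] [Fintype ι]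
    [DecidableEq ι] {M : Matrix ι ι 𝕜} (hM : IsUnit M) (x : EuclideanSpace 𝕜 ι) :
    Matrix.toEuclideanLin M⁻¹ (Matrix.toEuclideanLin M x) = x := by
  rw [← LinearMap.comp_apply, ← Matrix.toLpLin_mul_same,
    Matrix.nonsing_inv_mul _ ((Matrix.isUnit_iff_isUnit_det M).mp hM), Matrix.toLpLin_one,
    LinearMap.id_apply]

theorem pid_hurwitz_of_gain_conditions {kp kd kI κ δ : ℝ} (hkd : 0 < kd) (hδ : δ = |κ - 1|)
    (hkI : kI < kd ^ 3 * (1 - δ ^ 2)) (hkp : 2 * κ * kd ^ 2 < kp) : kI < kd * kp := by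
  rw [hδ, sq_abs] at hkI
  nlinarith [mul_nonneg (sq_nonneg κ) (pow_pos hkd 3).le, mul_lt_mul_of_pos_left hkp hkd]

theorem pid_Rn_exponential_convergence_general
    (n : ℕ)
    (M : Matrix (Fin n) (Fin n) ℝ) (hM : M.PosDef)
    (Δd : EuclideanSpace ℝ (Fin n))
    (kp kd kI κ : ℝ)
    (hkp : 0 < kp) (hkd : 0 < kd) (hkI0 : 0 < kI)
    (δ : ℝ) (hδ : δ = |κ - 1|)
    (hkI : kI < kd ^ 3 * (1 - δ ^ 2))
    (k₁ k₂ : ℝ)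
    (hkpbig : max (max k₁ k₂) (2 * κ * kd ^ 2) < kp)
    (E EI : ℝ → EuclideanSpace ℝ (Fin n))
    (hE : ContDiff ℝ 2 E) (hEI : ContDiff ℝ 2 EI)
    (hode₁ : ∀ t ≥ (0 : ℝ), deriv EI t = E t)
    (hode₂ : ∀ t ≥ (0 : ℝ),
      Matrix.toEuclideanLin M (deriv (deriv E) t) =
        -(Matrix.toEuclideanLin M (kp • E t + kd • deriv E t + kI • EI t)) + Δd) :
    ∃ C > (0 : ℝ), ∃ a > (0 : ℝ), ∀ t ≥ (0 : ℝ),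
      ‖E t‖ + ‖deriv E t‖ + ‖EI t - kI⁻¹ • (Matrix.toEuclideanLin M⁻¹ Δd)‖ ≤
        C * Real.exp (-a * t) := by
  set c := kI⁻¹ • Matrix.toEuclideanLin M⁻¹ Δd
  have hD := pid_hurwitz_of_gain_conditions hkd hδ hkI ((le_max_right _ _).trans_lt hkpbig)
  have hkIc : kI • c = Matrix.toEuclideanLin M⁻¹ Δd := smul_inv_smul₀ hkI0.ne' _
  have hderivE : Differentiable ℝ (deriv E) := (hE.deriv' (n := 1)).differentiable one_ne_zero
  have hloop : ∀ t ≥ (0 : ℝ),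
      deriv (deriv E) t + kd • deriv E t = -(kp • E t) - kI • (EI t - c) := fun t ht ↦ by
    have h := congrArg (Matrix.toEuclideanLin M⁻¹) (hode₂ t ht)
    rw [map_add, map_neg, toEuclideanLin_inv_apply_toEuclideanLin hM.isUnit,
      toEuclideanLin_inv_apply_toEuclideanLin hM.isUnit, ← hkIc] at h
    rw [h, smul_sub]
    abel
  have hEdiff := hE.differentiable two_ne_zero
  obtain ⟨C, hC, a, ha, hdecay⟩ := pid_state_exp_decay hkp hkd hkI0 hD
    (z := fun t ↦ EI t - c) (e := E) (w := fun t ↦ deriv E t + kd • E t)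
    (fun t ht ↦ hode₁ t ht ▸ (hEI.differentiable two_ne_zero t).hasDerivAt.sub_const c)
    (fun t _ ↦ (hEdiff t).hasDerivAt.congr_deriv (add_sub_cancel_right _ (kd • E t)).symm)
    (fun t ht ↦ ((hderivE t).hasDerivAt.add ((hEdiff t).hasDerivAt.const_smul kd)).congr_deriv
      (hloop t ht))
  refine ⟨(1 + kd) * C, by positivity, a, ha, fun t ht ↦ ?_⟩
  have hv : ‖deriv E t‖ ≤ ‖deriv E t + kd • E t‖ + kd * ‖E t‖ := by
    simpa [norm_smul_of_nonneg hkd.le] using norm_sub_le (deriv E t + kd • E t) (kd • E t)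
  nlinarith [hdecay t ht, norm_nonneg (EI t - c), norm_nonneg (deriv E t + kd • E t),
    exp_pos (-a * t)]

/-- **PID control of a double integrator on ℝⁿ.**
For a symmetric positive definite mass matrix `M`, a constant disturbance `Δd`,
and PID gains satisfying the paper's gain conditions (with `μ = λ = 1`), every
twice continuously differentiable solution of the closed-loop error dynamics
`Ė_I = E`, `MË = −M(k_p E + k_d Ė + k_I E_I) + Δd`
converges exponentially to the equilibrium `(0, 0, M⁻¹Δd/k_I)`. -/
theorem pid_Rn_exponential_convergence
    (n : ℕ) (hn : 1 ≤ n)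
    (M : Matrix (Fin n) (Fin n) ℝ) (hM : M.PosDef)
    (Δd : EuclideanSpace ℝ (Fin n))
    (kp kd kI κ : ℝ)
    (hkp : 0 < kp) (hkd : 0 < kd) (hkI0 : 0 < kI)
    (hκ0 : 0 < κ) (hκ2 : κ < 2)
    (δ : ℝ) (hδ : δ = |κ - 1|)
    (hkI : kI < kd ^ 3 * (1 - δ ^ 2))
    (k₁ k₂ : ℝ)
    (hk₁ : k₁ = kI / (2 * kd) * (Real.sqrt (1 + 16 * κ ^ 2 * kd ^ 2 / kI) - 1))
    (hk₂ : k₂ = kI ^ 2 / (2 * kd ^ 4) *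
      (1 + Real.sqrt (1 + 4 * kd ^ 3 * (kI ^ 2 + 4 * κ * kd ^ 3 * (1 + κ * kd ^ 3)) / kI ^ 3)))
    (hkpbig : max (max k₁ k₂) (2 * κ * kd ^ 2) < kp)
    (E EI : ℝ → EuclideanSpace ℝ (Fin n))
    (hE : ContDiff ℝ 2 E) (hEI : ContDiff ℝ 2 EI)
    (hode₁ : ∀ t ≥ (0 : ℝ), deriv EI t = E t)
    (hode₂ : ∀ t ≥ (0 : ℝ),
      Matrix.toEuclideanLin M (deriv (deriv E) t) =
        -(Matrix.toEuclideanLin M (kp • E t + kd • deriv E t + kI • EI t)) + Δd) :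
    ∃ C > (0 : ℝ), ∃ a > (0 : ℝ), ∀ t ≥ (0 : ℝ),
      ‖E t‖ + ‖deriv E t‖ + ‖EI t - kI⁻¹ • (Matrix.toEuclideanLin M⁻¹ Δd)‖ ≤
        C * Real.exp (-a * t) :=
  pid_Rn_exponential_convergence_general n M hM Δd kp kd kI κ hkp hkd hkI0 δ hδ hkI k₁ k₂ hkpbig E
    EI hE hEI hode₁ hode₂
end

section
/- Let μ > 0, let κ satisfy 0 < κ < 2/μ, and set δ := |κμ − 1| (so δ < 1). Let k_p, k_d, k_I > 0 be gains satisfying 0 < k_I < k_d³(1 − δ²)/μ and k_p > 2κ k_d². Then the symmetric 3×3 real matrix Q = [[k_I²/k_d, 0, −δ k_I], [0, (k_I/k_d²)(k_p − 2κ k_d²), 0], [−δ k_I, 0, k_d − μ k_I/k_d²]] is positive definite. -/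
/-!
The middle coordinate of `Q` decouples, with diagonal entry positive because `k_p > 2κk_d²`.
The remaining 2×2 block has positive corner `k_I²/k_d` and determinant
`k_I² (k_d³(1 - δ²) - μ k_I) / k_d³`, positive exactly by the bound on `k_I`;
completing the square then gives positivity of the quadratic form.
-/

open Matrix

lemma binary_quadratic_pos_of_sq_lt_mul {a b d x y : ℝ} (ha : 0 < a) (hdisc : b ^ 2 < a * d)
    (hxy : x ≠ 0 ∨ y ≠ 0) : 0 < a * x ^ 2 + 2 * b * x * y + d * y ^ 2 := by
  have hscaled : a * (a * x ^ 2 + 2 * b * x * y + d * y ^ 2)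
      = (a * x + b * y) ^ 2 + (a * d - b ^ 2) * y ^ 2 := by ring
  refine pos_of_mul_pos_right ?_ ha.le
  rw [hscaled]
  rcases eq_or_ne y 0 with rfl | hy
  · have hx : x ≠ 0 := hxy.resolve_right (not_not.2 rfl)
    simp only [mul_zero, add_zero, zero_pow two_ne_zero]
    positivity
  · have : 0 < (a * d - b ^ 2) * y ^ 2 := mul_pos (sub_pos.2 hdisc) (by positivity)
    positivity

theorem Matrix.posDef_fin_three_of_sq_lt_mul {a b c d : ℝ} (ha : 0 < a) (hc : 0 < c)
    (hdisc : b ^ 2 < a * d) :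
    (!![a, 0, b; 0, c, 0; b, 0, d] : Matrix (Fin 3) (Fin 3) ℝ).PosDef := by
  rw [posDef_iff_dotProduct_mulVec]
  refine ⟨by ext i j; fin_cases i <;> fin_cases j <;> rfl, fun x hx => ?_⟩
  have hform : star x ⬝ᵥ (!![a, 0, b; 0, c, 0; b, 0, d] *ᵥ x)
      = (a * x 0 ^ 2 + 2 * b * x 0 * x 2 + d * x 2 ^ 2) + c * x 1 ^ 2 := by
    simp only [dotProduct, Pi.star_apply, star_trivial, mulVec, of_apply, cons_val',
      cons_val_fin_one, Fin.sum_univ_three, cons_val_zero, cons_val_one, cons_val]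
    ring
  rw [hform]
  by_cases h02 : x 0 = 0 ∧ x 2 = 0
  · have hx1 : x 1 ≠ 0 := fun h1 => hx (by ext i; fin_cases i <;> simp [h02.1, h02.2, h1])
    have : 0 < c * x 1 ^ 2 := by positivity
    rw [h02.1, h02.2]
    linarith
  · have := binary_quadratic_pos_of_sq_lt_mul ha hdisc (not_and_or.1 h02)
    positivity

theorem lyapunov_Q_posDef_general (μ κ kp kd kI δ : ℝ)
    (hμ : 0 < μ) (hkd : 0 < kd) (hkI0 : 0 < kI)
    (hkI : kI < kd ^ 3 * (1 - δ ^ 2) / μ)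
    (hkp : 2 * κ * kd ^ 2 < kp) :
    (!![kI ^ 2 / kd, 0, -(δ * kI);
        0, kI / kd ^ 2 * (kp - 2 * κ * kd ^ 2), 0;
        -(δ * kI), 0, kd - μ * kI / kd ^ 2] : Matrix (Fin 3) (Fin 3) ℝ).PosDef := by
  have hgap : 0 < kd ^ 3 * (1 - δ ^ 2) - kI * μ := by
    rw [lt_div_iff₀ hμ] at hkI
    linarith
  refine posDef_fin_three_of_sq_lt_mul (by positivity) (mul_pos (by positivity) (by linarith)) ?_
  have hdet : kI ^ 2 / kd * (kd - μ * kI / kd ^ 2) - (-(δ * kI)) ^ 2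
      = kI ^ 2 * (kd ^ 3 * (1 - δ ^ 2) - kI * μ) / kd ^ 3 := by
    field_simp
    ring
  have : 0 < kI ^ 2 * (kd ^ 3 * (1 - δ ^ 2) - kI * μ) / kd ^ 3 := by positivity
  linarith

/-- **Positive definiteness of the Lyapunov matrix `Q`** arising in the geometric
PID stability analysis, under the paper's gain conditions (11)–(12). -/
theorem lyapunov_Q_posDef (μ κ kp kd kI δ : ℝ)
    (hμ : 0 < μ) (hκ0 : 0 < κ) (hκ : κ < 2 / μ) (hδ : δ = |κ * μ - 1|)
    (hkp0 : 0 < kp) (hkd : 0 < kd) (hkI0 : 0 < kI)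
    (hkI : kI < kd ^ 3 * (1 - δ ^ 2) / μ)
    (hkp : 2 * κ * kd ^ 2 < kp) :
    (!![kI ^ 2 / kd, 0, -(δ * kI);
        0, kI / kd ^ 2 * (kp - 2 * κ * kd ^ 2), 0;
        -(δ * kI), 0, kd - μ * kI / kd ^ 2] : Matrix (Fin 3) (Fin 3) ℝ).PosDef :=
  lyapunov_Q_posDef_general μ κ kp kd kI δ hμ hkd hkI0 hkI hkp
end

section
/- Let E be a real 3×3 matrix with Eᵀ E = I₃ and det E = 1 (i.e. E ∈ SO(3)), and let η_E ∈ ℝ³ be the unique vector whose hat is E − Eᵀ (this matrix is skew-symmetric). Then ‖η_E‖² ≤ 4 · trace(I₃ − E). Equivalently, with the error function V(E) = trace(I₃ − E) and its Riemannian gradient η_E, one has ‖η_E‖² ≤ 2 · (2 V(E)), i.e. the Morse constant λ = sup_{E ∈ SO(3)} ‖η_E‖²/(2V(E)) satisfies λ ≤ 2. -/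
/-!
For a rotation `E` with `t = tr E`, the vector `η` with `η̂ = E - Eᵀ` satisfies
`2‖η‖² = ‖E - Eᵀ‖²_F = 2 tr (EᵀE) - 2 tr (E²) = 6 - 2 tr (E²)`. Since `adj E = Eᵀ`, the
3×3 identity `tr (A²) = (tr A)² - 2 tr (adj A)` gives `tr (E²) = t² - 2t`, so with
`V = tr (I - E) = 3 - t` one gets the exact formula `‖η‖² = V (4 - V)`, and
`4V - ‖η‖² = V² ≥ 0`.
-/

open Matrix

/-- The hat map sending `Ω ∈ ℝ³` to the skew-symmetric matrix `Ω̂`. -/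
def hat (Ω : EuclideanSpace ℝ (Fin 3)) : Matrix (Fin 3) (Fin 3) ℝ :=
  !![0, -Ω 2, Ω 1; Ω 2, 0, -Ω 0; -Ω 1, Ω 0, 0]

namespace Matrix

theorem adjugate_eq_transpose_of_transpose_mul_self_eq_one {n R : Type*} [Fintype n]
    [DecidableEq n] [CommRing R] {E : Matrix n n R} (horth : Eᵀ * E = 1) (hdet : E.det = 1) :
    E.adjugate = Eᵀ :=
  calc E.adjugate = Eᵀ * E * E.adjugate := by rw [horth, Matrix.one_mul]
    _ = Eᵀ * (E * E.adjugate) := Matrix.mul_assoc _ _ _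
    _ = Eᵀ := by rw [mul_adjugate, hdet, one_smul, Matrix.mul_one]

theorem trace_mul_self_fin_three {R : Type*} [CommRing R] (A : Matrix (Fin 3) (Fin 3) R) :
    (A * A).trace = A.trace ^ 2 - 2 * A.adjugate.trace := by
  simp only [trace_fin_three, mul_apply, Fin.sum_univ_three, adjugate_fin_three, of_apply,
    cons_val', cons_val_zero, cons_val_fin_one, cons_val_one, cons_val]
  ring

end Matrix

theorem trace_hat_mul_hat (Ω : EuclideanSpace ℝ (Fin 3)) :
    (hat Ω * hat Ω).trace = -2 * ‖Ω‖ ^ 2 := by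
  rw [EuclideanSpace.norm_sq_eq]
  simp only [hat, trace_fin_three, mul_apply, Fin.sum_univ_three, of_apply, cons_val',
    cons_val_zero, cons_val_fin_one, cons_val_one, cons_val, Real.norm_eq_abs, sq_abs]
  ring

theorem norm_sq_eq_of_hat_eq_sub_transpose {E : Matrix (Fin 3) (Fin 3) ℝ}
    {η : EuclideanSpace ℝ (Fin 3)} (hη : hat η = E - Eᵀ) :
    ‖η‖ ^ 2 = (Eᵀ * E).trace - (E * E).trace := by
  have hskew : ((E - Eᵀ) * (E - Eᵀ)).trace = 2 * (E * E).trace - 2 * (Eᵀ * E).trace := by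
    simp only [sub_mul, mul_sub, trace_sub]
    rw [← transpose_mul, trace_transpose, trace_mul_comm E Eᵀ]
    ring
  linarith [hη ▸ trace_hat_mul_hat η]

theorem norm_sq_eq_of_hat_eq_sub_transpose_of_mem_SO3 {E : Matrix (Fin 3) (Fin 3) ℝ}
    (horth : Eᵀ * E = 1) (hdet : E.det = 1) {η : EuclideanSpace ℝ (Fin 3)}
    (hη : hat η = E - Eᵀ) :
    ‖η‖ ^ 2 = (1 - E).trace * (4 - (1 - E).trace) := by
  rw [norm_sq_eq_of_hat_eq_sub_transpose hη, horth, trace_mul_self_fin_three,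
    adjugate_eq_transpose_of_transpose_mul_self_eq_one horth hdet, trace_transpose, trace_sub,
    trace_one, Fintype.card_fin]
  ring

/-- **Quadratic lower bound for the error function on SO(3):** if `E ∈ SO(3)` and
`η` is the vector with `η̂ = E - Eᵀ` (the gradient of `V(E) = trace(I₃ - E)`), then
`‖η‖² ≤ 4 · trace(I₃ - E)`, i.e. the Morse constant `λ` satisfies `λ ≤ 2`. -/
theorem gradient_quadratic_bound (E : Matrix (Fin 3) (Fin 3) ℝ)
    (horth : Eᵀ * E = 1) (hdet : E.det = 1)
    (η : EuclideanSpace ℝ (Fin 3)) (hη : hat η = E - Eᵀ) :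
    ‖η‖ ^ 2 ≤ 4 * (1 - E).trace := by
  rw [norm_sq_eq_of_hat_eq_sub_transpose_of_mem_SO3 horth hdet hη]
  nlinarith [sq_nonneg (1 - E).trace]
end
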